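/- arXiv:1710.10610 — 5 statements merged into one kernel-verified Lean document; each statement's English description precedes it below -/
import Mathlib

section
/- The trinomial polynomial g = T_0^{l_0} + T_1^{l_1} + T_2^{l_2} is irreducible in the polynomial ring K[T_{ij}], where K is an algebraically closed field of characteristic zero. -/
open MvPolynomial

/-- Index set of the variables `T_{ij}`, `i = 0,1,2`, `j = 1,…,n_i`. -/
abbrev TrinIdx (n : Fin 3 → ℕ) : Type := Σ i : Fin 3, Fin (n i)

/-- The trinomial `g = T₀^{l₀} + T₁^{l₁} + T₂^{l₂}` where
`T_i^{l_i} = ∏_j T_{ij}^{l_{ij}}`. -/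
noncomputable def trinomial (K : Type*) [Field K] (n : Fin 3 → ℕ)
    (l : ∀ i : Fin 3, Fin (n i) → ℕ) : MvPolynomial (TrinIdx n) K :=
  ∑ i : Fin 3, ∏ j : Fin (n i), X (⟨i, j⟩ : TrinIdx n) ^ l i j

/-!
Single out the variable `T = T_{01}` and write `g = u T^m + c` over the polynomial ring in the
remaining variables, where `u = T₀^{l₀} / T^m` is a monomial and `c = T₁^{l₁} + T₂^{l₂}`.
Since `T₁^{l₁}` and `T₂^{l₂}` share no variable, no variable divides `c`; hence `c` is coprime
to every monomial, and in characteristic zero it is squarefree, because a square factor of `c`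
would also divide `∂c/∂T_{21}`, which is a monomial. Any prime factor `q` of the non-unit `c`
then makes `u T^m + c` Eisenstein at `q`, and it is primitive because `u` and `c` are coprime.
-/

namespace Polynomial

variable {R : Type*} [CommRing R] [IsDomain R]

theorem irreducible_C_mul_X_pow_add_C {u c q : R} {m : ℕ} (hm : m ≠ 0) (hq : Prime q)
    (hqc : q ∣ c) (hq2 : ¬ q ^ 2 ∣ c) (huc : IsRelPrime u c) :
    Irreducible (C u * X ^ m + C c) := by
  have hu : u ≠ 0 := by
    rintro rfl
    exact hq.not_isUnit (isUnit_of_dvd_unit hqc (isRelPrime_zero_left.mp huc))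
  have hdeg : (C u * X ^ m + C c).natDegree = m := by
    rw [natDegree_add_C, natDegree_C_mul_X_pow _ _ hu]
  have hcoeff (i : ℕ) : (C u * X ^ m + C c).coeff i =
      (if i = m then u else 0) + if i = 0 then c else 0 := by
    simp [coeff_C, coeff_X_pow]
  have hcoeff_zero : (C u * X ^ m + C c).coeff 0 = c := by simp [hcoeff, Ne.symm hm]
  have hqu : ¬ q ∣ u := fun h => hq.not_isUnit (huc h hqc)
  refine IsEisensteinAt.irreducible (𝓟 := Ideal.span {q}) ⟨?_, fun {i} hi => ?_, ?_⟩
    ((Ideal.span_singleton_prime hq.ne_zero).mpr hq) ?_ (by omega)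
  · simpa [leadingCoeff, hdeg, hcoeff, hm, Ideal.mem_span_singleton] using hqu
  · rw [hdeg] at hi
    rw [hcoeff, if_neg hi.ne, zero_add, Ideal.mem_span_singleton]
    split_ifs
    exacts [hqc, dvd_zero q]
  · simpa [hcoeff_zero, Ideal.span_singleton_pow, Ideal.mem_span_singleton] using hq2
  · rw [isPrimitive_iff_isUnit_of_C_dvd]
    intro r hr
    rw [C_dvd_iff_dvd_coeff] at hr
    exact huc (by simpa [hcoeff, hm] using hr m) (hcoeff_zero ▸ hr 0)

theorem irreducible_C_mul_X_pow_add_C_of_squarefree [UniqueFactorizationMonoid R]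
    {u c : R} {m : ℕ} (hm : m ≠ 0) (hc : Squarefree c) (hcu : ¬ IsUnit c) (huc : IsRelPrime u c) :
    Irreducible (C u * X ^ m + C c) := by
  obtain ⟨q, hq, hqc⟩ := WfDvdMonoid.exists_irreducible_factor hcu hc.ne_zero
  exact irreducible_C_mul_X_pow_add_C hm hq.prime hqc
    (fun hq2 => hq.not_isUnit (hc q (pow_two q ▸ hq2))) huc

end Polynomial

theorem Finsupp.disjoint_subtypeDomain {ι α : Type*} [AddCommMonoid α] [LinearOrder α]
    [IsBotZeroClass α] {f g : ι →₀ α} (p : ι → Prop) (h : Disjoint f g) :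
    Disjoint (f.subtypeDomain p) (g.subtypeDomain p) := by
  rw [Finsupp.disjoint_iff, Finset.disjoint_left] at h ⊢
  intro w hf hg
  exact h (Finsupp.mem_support_iff.mpr (by simpa using hf)) (by simpa using hg)

namespace MvPolynomial

section CommRing

variable {σ R : Type*} [CommRing R]

theorem coeff_eq_zero_of_X_dvd {v : σ} {p : MvPolynomial σ R} (h : X v ∣ p) {d : σ →₀ ℕ}
    (hd : d v = 0) : coeff d p = 0 := by
  classical
  obtain ⟨q, rfl⟩ := h
  simp [coeff_X_mul', hd]

variable [IsDomain R]

theorem exists_X_dvd_of_dvd_monomial {p : MvPolynomial σ R} {d : σ →₀ ℕ}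
    (h : p ∣ monomial d 1) (hp : ¬ IsUnit p) : ∃ v, X v ∣ p := by
  obtain ⟨e, r, -, hr, rfl⟩ :=
    dvd_monomial_mul_iff_exists.mp (mul_one (monomial d (1 : R)) ▸ h)
  obtain ⟨v, hv⟩ : e.support.Nonempty := by
    rw [Finsupp.support_nonempty_iff]
    rintro rfl
    exact hp (by simpa using isUnit_of_dvd_one hr)
  exact ⟨v, (X_dvd_monomial.mpr (Or.inr (Finsupp.mem_support_iff.mp hv))).mul_right r⟩

theorem isRelPrime_monomial_of_forall_not_X_dvd {p : MvPolynomial σ R} (h : ∀ v, ¬ X v ∣ p)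
    (d : σ →₀ ℕ) : IsRelPrime (monomial d 1) p := by
  intro x hxd hxp
  by_contra hx
  obtain ⟨v, hv⟩ := exists_X_dvd_of_dvd_monomial hxd hx
  exact h v (hv.trans hxp)

end CommRing

section Binomial

variable {σ : Type*} {s t : σ →₀ ℕ}

theorem not_isUnit_monomial_add_monomial {R : Type*} [CommRing R] [Nontrivial R] (hst : s ≠ t) :
    ¬ IsUnit (monomial s (1 : R) + monomial t 1) := by
  classical
  intro h
  rcases eq_or_ne t 0 with rfl | ht
  · have := (isUnit_iff.mp h).2 s hst
    exact not_isNilpotent_one (by simpa [coeff_monomial, coeff_one, hst.symm] using this)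
  · have := (isUnit_iff.mp h).2 t ht
    exact not_isNilpotent_one (by simpa [coeff_monomial, hst] using this)

theorem not_X_dvd_monomial_add_monomial {R : Type*} [CommRing R] [Nontrivial R]
    (hst : Disjoint s t) (hne : s ≠ t) (v : σ) :
    ¬ X v ∣ monomial s (1 : R) + monomial t 1 := by
  classical
  intro h
  rw [Finsupp.disjoint_iff, Finset.disjoint_left] at hst
  by_cases hs : s v = 0
  · simpa [coeff_monomial, hne.symm] using coeff_eq_zero_of_X_dvd h hs
  · have ht : t v = 0 := by simpa using hst (Finsupp.mem_support_iff.mpr hs)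
    simpa [coeff_monomial, hne] using coeff_eq_zero_of_X_dvd h ht

theorem squarefree_monomial_add_monomial {K : Type*} [Field K] [CharZero K]
    (hst : Disjoint s t) (ht : t ≠ 0) : Squarefree (monomial s (1 : K) + monomial t 1) := by
  intro x hx
  obtain ⟨w, hw⟩ : t.support.Nonempty := Finsupp.support_nonempty_iff.mpr ht
  have hsw : s w = 0 := by
    rw [Finsupp.disjoint_iff, Finset.disjoint_right] at hst
    simpa using hst hw
  have hxd : x ∣ pderiv w (monomial s (1 : K) + monomial t 1) := by
    obtain ⟨y, hy⟩ := hx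
    rw [hy, mul_assoc, pderiv_mul]
    exact dvd_add (dvd_mul_of_dvd_right (dvd_mul_right x y) _) (dvd_mul_right x _)
  have hderiv : pderiv w (monomial s (1 : K) + monomial t 1) =
      C (t w : K) * monomial (t - Finsupp.single w 1) 1 := by
    rw [map_add, pderiv_monomial, pderiv_monomial, hsw, C_mul_monomial]
    simp
  have htw : IsUnit (C (t w : K) : MvPolynomial σ K) :=
    (isUnit_iff_ne_zero.mpr (Nat.cast_ne_zero.mpr (Finsupp.mem_support_iff.mp hw))).map C
  rw [hderiv, htw.dvd_mul_left] at hxd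
  by_contra hxu
  obtain ⟨v, hv⟩ := exists_X_dvd_of_dvd_monomial hxd hxu
  exact not_X_dvd_monomial_add_monomial hst (hst.symm.ne ht).symm v
    (hv.trans (dvd_of_mul_left_dvd hx))

end Binomial

section EquivPolynomial

variable (R : Type*) [CommRing R] {σ : Type*} [DecidableEq σ]

noncomputable def equivPolynomialSubtypeNe (v : σ) :
    MvPolynomial σ R ≃ₐ[R] Polynomial (MvPolynomial {w // w ≠ v} R) :=
  (renameEquiv R (Equiv.optionSubtypeNe v).symm).trans (optionEquivLeft R _)

variable {R}

theorem equivPolynomialSubtypeNe_monomial (v : σ) (d : σ →₀ ℕ) (r : R) :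
    equivPolynomialSubtypeNe R v (monomial d r) =
      Polynomial.monomial (d v) (monomial (d.subtypeDomain (· ≠ v)) r) := by
  have hsome :
      (d.equivMapDomain (Equiv.optionSubtypeNe v).symm).some = d.subtypeDomain (· ≠ v) := by
    ext w
    simp
  rw [equivPolynomialSubtypeNe, AlgEquiv.trans_apply, renameEquiv_apply, rename_monomial,
    optionEquivLeft_monomial, ← Finsupp.equivMapDomain_eq_mapDomain, hsome]
  simp

end EquivPolynomial

end MvPolynomial

noncomputable def trinomialExponent (n : Fin 3 → ℕ) (l : ∀ i : Fin 3, Fin (n i) → ℕ)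
    (i : Fin 3) : TrinIdx n →₀ ℕ :=
  ∑ j, Finsupp.single ⟨i, j⟩ (l i j)

section TrinomialExponent

variable {n : Fin 3 → ℕ} {l : ∀ i : Fin 3, Fin (n i) → ℕ}

theorem trinomial_eq_sum_monomial (K : Type*) [Field K] :
    trinomial K n l = ∑ i, monomial (trinomialExponent n l i) 1 := by
  simp only [trinomial, trinomialExponent, monomial_sum_one, X_pow_eq_monomial]

theorem trinomialExponent_apply_mk (i : Fin 3) (j : Fin (n i)) :
    trinomialExponent n l i ⟨i, j⟩ = l i j := by
  classical
  rw [trinomialExponent, Finsupp.finsetSum_apply, Finset.sum_eq_single j]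
  · simp
  · intro j' _ hj'
    exact Finsupp.single_eq_of_ne (by simpa using hj'.symm)
  · simp

theorem trinomialExponent_apply_of_fst_ne {i : Fin 3} {w : TrinIdx n} (hw : w.1 ≠ i) :
    trinomialExponent n l i w = 0 := by
  rw [trinomialExponent, Finsupp.finsetSum_apply]
  refine Finset.sum_eq_zero fun j _ => Finsupp.single_eq_of_ne ?_
  rintro rfl
  exact hw rfl

theorem disjoint_trinomialExponent {i i' : Fin 3} (hi : i ≠ i') :
    Disjoint (trinomialExponent n l i) (trinomialExponent n l i') := by
  rw [Finsupp.disjoint_iff, Finset.disjoint_left]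
  intro w hw hw'
  rw [Finsupp.mem_support_iff] at hw hw'
  have h : w.1 = i := by_contra fun h => hw (trinomialExponent_apply_of_fst_ne h)
  have h' : w.1 = i' := by_contra fun h' => hw' (trinomialExponent_apply_of_fst_ne h')
  exact hi (h.symm.trans h')

theorem equivPolynomialSubtypeNe_trinomial (K : Type*) [Field K] (j : Fin (n 0)) :
    equivPolynomialSubtypeNe K ⟨0, j⟩ (trinomial K n l) =
      Polynomial.C (monomial ((trinomialExponent n l 0).subtypeDomain (· ≠ ⟨0, j⟩)) 1) *
          Polynomial.X ^ l 0 j +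
        Polynomial.C (monomial ((trinomialExponent n l 1).subtypeDomain (· ≠ ⟨0, j⟩)) 1 +
          monomial ((trinomialExponent n l 2).subtypeDomain (· ≠ ⟨0, j⟩)) 1) := by
  rw [trinomial_eq_sum_monomial, map_sum, Fin.sum_univ_three]
  simp only [equivPolynomialSubtypeNe_monomial, trinomialExponent_apply_mk,
    trinomialExponent_apply_of_fst_ne (w := ⟨0, j⟩) (i := 1) (show (0 : Fin 3) ≠ 1 by decide),
    trinomialExponent_apply_of_fst_ne (w := ⟨0, j⟩) (i := 2) (show (0 : Fin 3) ≠ 2 by decide)]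
  rw [← Polynomial.C_mul_X_pow_eq_monomial, Polynomial.monomial_zero_left,
    Polynomial.monomial_zero_left, map_add, add_assoc]

end TrinomialExponent

theorem trinomial_irreducible_general (K : Type*) [Field K] [CharZero K]
    (n : Fin 3 → ℕ) (l : ∀ i : Fin 3, Fin (n i) → ℕ)
    (hn : ∀ i, 0 < n i) (hl : ∀ i j, 0 < l i j) :
    Irreducible (trinomial K n l) := by
  set v : TrinIdx n := ⟨0, ⟨0, hn 0⟩⟩
  set d : Fin 3 → ({w // w ≠ v} →₀ ℕ) := fun i =>
    (trinomialExponent n l i).subtypeDomain (· ≠ v)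
  have hdisj : Disjoint (d 1) (d 2) :=
    Finsupp.disjoint_subtypeDomain _ (disjoint_trinomialExponent (by decide))
  have hd2 : d 2 ≠ 0 := by
    refine Finsupp.ne_iff.mpr ⟨⟨⟨2, ⟨0, hn 2⟩⟩, by simp [v]⟩, ?_⟩
    simpa [d, trinomialExponent_apply_mk] using (hl 2 _).ne'
  have hne : d 1 ≠ d 2 := (hdisj.symm.ne hd2).symm
  rw [← MulEquiv.irreducible_iff (equivPolynomialSubtypeNe K v),
    equivPolynomialSubtypeNe_trinomial]
  exact Polynomial.irreducible_C_mul_X_pow_add_C_of_squarefree (hl 0 _).ne'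
    (squarefree_monomial_add_monomial hdisj hd2) (not_isUnit_monomial_add_monomial hne)
    (isRelPrime_monomial_of_forall_not_X_dvd (not_X_dvd_monomial_add_monomial hdisj hne) _)

/-- The trinomial `g = T₀^{l₀} + T₁^{l₁} + T₂^{l₂}` is irreducible in the polynomial ring
`K[T_{ij}]` over an algebraically closed field `K` of characteristic zero. -/
theorem trinomial_irreducible (K : Type*) [Field K] [IsAlgClosed K] [CharZero K]
    (n : Fin 3 → ℕ) (l : ∀ i : Fin 3, Fin (n i) → ℕ)
    (hn : ∀ i, 0 < n i) (hl : ∀ i j, 0 < l i j) :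
    Irreducible (trinomial K n l) :=
  trinomial_irreducible_general K n l hn hl
end

section
/- Let R be a commutative domain over a field of characteristic zero, δ a locally nilpotent derivation of R, and f ∈ R. If f divides δ(f), then δ(f) = 0. -/
/-!
For `a ≠ 0` let `deg a` be the largest `n` with `δⁿ a ≠ 0`. In the general Leibniz expansion of
`δ^(i + j) (a * b)` with `i = deg a`, `j = deg b`, every term but `(i + j).choose i • δⁱ a * δʲ b`
vanishes, so in a domain of characteristic zero `deg (a * b) = deg a + deg b`. If `δ f = f * c`
were nonzero, then `deg f - 1 = deg (δ f) = deg f + deg c`, which is absurd.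
-/

open Finset

namespace Derivation

variable {R A : Type*} [CommSemiring R] [CommSemiring A] [Algebra R A] (D : Derivation R A A)

theorem iterate_apply_mul (n : ℕ) (a b : A) :
    D^[n] (a * b) = ∑ ij ∈ antidiagonal n, n.choose ij.1 • (D^[ij.1] a * D^[ij.2] b) := by
  induction n with
  | zero => simp
  | succ n ih =>
    rw [sum_antidiagonal_choose_succ_nsmul (M := A) (fun i j => D^[i] a * D^[j] b) n]
    simp only [Function.iterate_succ_apply', ih, map_sum, map_nsmul, leibniz, smul_eq_mul,
      smul_add, sum_add_distrib]
    congr 1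
    refine sum_congr rfl fun ⟨i, j⟩ hij => ?_
    rw [n.choose_symm_of_eq_add (HasAntidiagonal.mem_antidiagonal.1 hij).symm]
    ring

theorem iterate_apply_eq_zero_of_le {a : A} {m n : ℕ} (h : D^[m] a = 0) (hmn : m ≤ n) :
    D^[n] a = 0 := by
  obtain ⟨d, rfl⟩ := Nat.exists_eq_add_of_le hmn
  rw [add_comm, Function.iterate_add_apply, h, iterate_map_zero]

theorem iterate_add_apply_mul_ne_zero {A : Type*} [CommRing A] [IsDomain A] [CharZero A]
    [Algebra R A] (D : Derivation R A A) {a b : A} {i j : ℕ}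
    (ha : D^[i] a ≠ 0) (ha' : D^[i + 1] a = 0) (hb : D^[j] b ≠ 0) (hb' : D^[j + 1] b = 0) :
    D^[i + j] (a * b) ≠ 0 := by
  rw [iterate_apply_mul, sum_eq_single_of_mem (i, j) (HasAntidiagonal.mem_antidiagonal.2 rfl)]
  · exact smul_ne_zero (Nat.choose_pos (Nat.le_add_right i j)).ne' (mul_ne_zero ha hb)
  rintro ⟨k, l⟩ hkl hne
  have hkl : k + l = i + j := HasAntidiagonal.mem_antidiagonal.1 hkl
  have hki : k ≠ i := by
    rintro rfl
    exact hne (Prod.ext rfl (by dsimp only; omega))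
  rcases lt_or_gt_of_ne hki with hki | hik
  · rw [D.iterate_apply_eq_zero_of_le hb' (by dsimp only; omega), mul_zero, smul_zero]
  · rw [D.iterate_apply_eq_zero_of_le ha' hik, zero_mul, smul_zero]

end Derivation

theorem Function.exists_iterate_ne_and_iterate_succ_eq {α : Type*} (g : α → α) {a z : α}
    (ha : a ≠ z) (h : ∃ m, g^[m] a = z) : ∃ n, g^[n] a ≠ z ∧ g^[n + 1] a = z := by
  classical
  have hpos : Nat.find h ≠ 0 := fun h0 => ha (by simpa [h0] using Nat.find_spec h)
  refine ⟨Nat.find h - 1, Nat.find_min h (by omega), ?_⟩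
  rw [Nat.sub_add_cancel (Nat.one_le_iff_ne_zero.2 hpos)]
  exact Nat.find_spec h

/-- If `δ` is a locally nilpotent derivation of a commutative domain `R` over a field `K`
of characteristic zero and `f ∣ δ f`, then `δ f = 0`. -/
theorem dvd_self_image_of_lnd {K R : Type*} [Field K] [CharZero K]
    [CommRing R] [IsDomain R] [Algebra K R]
    (δ : Derivation K R R)
    (hln : ∀ f : R, ∃ m : ℕ, (δ.toLinearMap ^ m) f = 0)
    (f : R) (h : f ∣ δ f) : δ f = 0 := by
  have : CharZero R := charZero_of_injective_algebraMap (algebraMap K R).injective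
  have hnil (a : R) : ∃ m, δ^[m] a = 0 := by
    simpa only [Module.End.pow_apply, Derivation.coeFn_coe] using hln a
  by_contra hδf
  obtain ⟨c, hc⟩ := h
  have hf : f ≠ 0 := by rintro rfl; simp at hδf
  have hc0 : c ≠ 0 := by rintro rfl; simp_all
  obtain ⟨n, hfn, hfn'⟩ := Function.exists_iterate_ne_and_iterate_succ_eq δ hf (hnil f)
  obtain ⟨m, hcm, hcm'⟩ := Function.exists_iterate_ne_and_iterate_succ_eq δ hc0 (hnil c)
  refine δ.iterate_add_apply_mul_ne_zero hfn hfn' hcm hcm' ?_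
  rw [← hc, ← Function.iterate_succ_apply]
  exact δ.iterate_apply_eq_zero_of_le hfn' (by omega)
end

section
/- Let R be a commutative domain over a field of characteristic zero, δ a locally nilpotent derivation of R, and f, g ∈ R. If f divides δ(g) and g divides δ(f), then δ(f) = 0 or δ(g) = 0. -/
/-!
Call `d` the `δ`-degree of `x` when `δ^[d] x ≠ 0 = δ^[d + 1] x`. In a domain of characteristic
zero degrees add under multiplication: the only surviving term of the Leibniz expansion of
`δ^[m + n] (a * b)` is a nonzero binomial multiple of `δ^[m] a * δ^[n] b`. Hence
`δ g = f * c ≠ 0` gives `deg f + deg c = deg g - 1`, so `deg f < deg g`, and the two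
divisibilities together are contradictory.
-/

open Finset Function

namespace Function

variable {α : Type*} [Zero α] {φ : α → α} {x : α}

theorem iterate_eq_zero_of_le (hφ : φ 0 = 0) {m n : ℕ} (hmn : m ≤ n) (h : φ^[m] x = 0) :
    φ^[n] x = 0 := by
  obtain ⟨k, rfl⟩ := Nat.exists_eq_add_of_le hmn
  rw [add_comm, iterate_add_apply, h, iterate_fixed hφ]

theorem exists_iterate_ne_zero_and_succ_eq_zero (hx : x ≠ 0) (hnil : ∃ m, φ^[m] x = 0) :
    ∃ d, φ^[d] x ≠ 0 ∧ φ^[d + 1] x = 0 := by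
  classical
  have hpos : Nat.find hnil ≠ 0 := fun h => hx (by simpa [h] using Nat.find_spec hnil)
  refine ⟨Nat.find hnil - 1, Nat.find_min hnil (by omega), ?_⟩
  rw [Nat.sub_add_cancel (Nat.pos_of_ne_zero hpos)]
  exact Nat.find_spec hnil

end Function

namespace Derivation

variable {K R : Type*} [CommSemiring K] [CommRing R] [Algebra K R] (δ : Derivation K R R)

theorem iterate_map_mul (n : ℕ) (a b : R) :
    δ^[n] (a * b) = ∑ ij ∈ antidiagonal n, n.choose ij.1 • (δ^[ij.1] a * δ^[ij.2] b) := by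
  induction n with
  | zero => simp
  | succ n ih =>
    rw [sum_antidiagonal_choose_succ_nsmul (M := R) (fun i j => δ^[i] a * δ^[j] b) n]
    simp only [iterate_succ_apply', ih, map_sum, map_nsmul, leibniz, smul_eq_mul,
      smul_add, sum_add_distrib]
    congr 1
    refine sum_congr rfl fun ⟨i, j⟩ hij => ?_
    rw [n.choose_symm_of_eq_add (HasAntidiagonal.mem_antidiagonal.1 hij).symm]
    ring

theorem iterate_add_map_mul {a b : R} {m n : ℕ} (ha : δ^[m + 1] a = 0) (hb : δ^[n + 1] b = 0) :
    δ^[m + n] (a * b) = (m + n).choose m • (δ^[m] a * δ^[n] b) := by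
  rw [iterate_map_mul, sum_eq_single (m, n)]
  · rintro ⟨i, j⟩ hij hne
    rw [HasAntidiagonal.mem_antidiagonal] at hij
    rcases Nat.lt_or_ge m i with hi | hi
    · rw [iterate_eq_zero_of_le δ.map_zero hi ha, zero_mul, smul_zero]
    · have hj : n + 1 ≤ j := by
        by_contra!
        exact hne (by rw [Prod.mk.injEq]; omega)
      rw [iterate_eq_zero_of_le δ.map_zero hj hb, mul_zero, smul_zero]
  · simp

theorem iterate_add_map_mul_ne_zero [IsDomain R] [CharZero R] {a b : R} {m n : ℕ}
    (ha : δ^[m] a ≠ 0) (ha' : δ^[m + 1] a = 0) (hb : δ^[n] b ≠ 0) (hb' : δ^[n + 1] b = 0) :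
    δ^[m + n] (a * b) ≠ 0 := by
  rw [δ.iterate_add_map_mul ha' hb', nsmul_eq_mul]
  exact mul_ne_zero (Nat.cast_ne_zero.mpr (Nat.choose_pos (Nat.le_add_right m n)).ne')
    (mul_ne_zero ha hb)

theorem lt_of_dvd_apply [IsDomain R] [CharZero R] (hnil : ∀ x : R, ∃ m, δ^[m] x = 0)
    {f g : R} {p q : ℕ} (hfg : f ∣ δ g) (hg : δ g ≠ 0)
    (hf : δ^[p] f ≠ 0) (hf' : δ^[p + 1] f = 0) (hg' : δ^[q + 1] g = 0) : p < q := by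
  obtain ⟨c, hc⟩ := hfg
  have hc0 : c ≠ 0 := by rintro rfl; exact hg (by rw [hc, mul_zero])
  obtain ⟨r, hr, hr'⟩ := exists_iterate_ne_zero_and_succ_eq_zero hc0 (hnil c)
  have hgr : δ^[p + r + 1] g ≠ 0 := by
    rw [iterate_succ_apply, hc]
    exact δ.iterate_add_map_mul_ne_zero hf hf' hr hr'
  by_contra! hqp
  exact hgr (iterate_eq_zero_of_le δ.map_zero (by omega) hg')

end Derivation

/-- If `δ` is a locally nilpotent derivation of a commutative domain over a field of
characteristic zero, `f ∣ δ g` and `g ∣ δ f`, then `δ f = 0` or `δ g = 0`. -/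
theorem lnd_dvd_pair {K R : Type*} [Field K] [CharZero K]
    [CommRing R] [IsDomain R] [Algebra K R]
    (δ : Derivation K R R)
    (hln : ∀ f : R, ∃ m : ℕ, (δ.toLinearMap ^ m) f = 0)
    (f g : R) (hf : f ∣ δ g) (hg : g ∣ δ f) :
    δ f = 0 ∨ δ g = 0 := by
  have : CharZero R := charZero_of_injective_algebraMap (algebraMap K R).injective
  have hnil : ∀ x : R, ∃ m, δ^[m] x = 0 := fun x => by
    simpa [Module.End.pow_apply] using hln x
  by_contra! ⟨hδf, hδg⟩
  obtain ⟨p, hp, hp'⟩ :=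
    exists_iterate_ne_zero_and_succ_eq_zero (ne_zero_of_dvd_ne_zero hδg hf) (hnil f)
  obtain ⟨q, hq, hq'⟩ :=
    exists_iterate_ne_zero_and_succ_eq_zero (ne_zero_of_dvd_ne_zero hδf hg) (hnil g)
  exact lt_asymm (δ.lt_of_dvd_apply hnil hf hδg hp hp' hq')
    (δ.lt_of_dvd_apply hnil hg hδf hq hq' hp')
end

section
/- Let R be a finitely generated Z^k-graded domain over a field of characteristic zero. If R admits a nonzero locally nilpotent derivation, then R admits a nonzero locally nilpotent derivation that is homogeneous with respect to the Z^k-grading. -/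
/-!
Decompose `δ` into homogeneous derivations `δ_w`, where `δ_w` sends `x ∈ 𝒜 v` to the degree
`v + w` part of `δ x`. Only finitely many `δ_w` are nonzero, since they are determined by their
values on finitely many generators. Order `ℤᵏ` lexicographically and let `w₀` be the largest
degree with `δ_{w₀} ≠ 0`. For `x` of degree `c` the part of `δᴺ x` of highest possible degree
`c + N • w₀` is `δ_{w₀}ᴺ x`, so `δ_{w₀}` inherits local nilpotency from `δ`.
-/

open DirectSum GradedAlgebra

theorem GradedAlgebra.induction_on_of_forall_lt_proj_eq_zero {K R ι : Type*} [CommSemiring K]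
    [Semiring R] [Algebra K R] [DecidableEq ι] [AddMonoid ι] [LinearOrder ι]
    (𝒜 : ι → Submodule K R) [GradedAlgebra 𝒜] {c : ι} {motive : R → Prop} (zero : motive 0)
    (add : ∀ x y, motive x → motive y → motive (x + y))
    (homogeneous : ∀ t ≤ c, ∀ x ∈ 𝒜 t, motive x)
    {z : R} (hz : ∀ u, c < u → proj 𝒜 u z = 0) : motive z := by
  classical
  rw [← sum_support_decompose 𝒜 z]
  refine Finset.sum_induction _ motive add zero fun t ht => homogeneous t ?_ _ (decompose 𝒜 z t).2
  by_contra! hct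
  exact (mem_support_iff 𝒜 z t).1 ht (hz t hct)

namespace Derivation

section HomogeneousComponent

variable {K R ι : Type*} [CommSemiring K] [CommRing R] [Algebra K R]
  [DecidableEq ι] [AddCommGroup ι] (𝒜 : ι → Submodule K R) [GradedAlgebra 𝒜]
  (δ : Derivation K R R)

noncomputable def homogeneousComponentLinearMap (w : ι) : R →ₗ[K] R :=
  toModule K ι R (fun v => proj 𝒜 (v + w) ∘ₗ δ.toLinearMap ∘ₗ (𝒜 v).subtype) ∘ₗ
    (decomposeLinearEquiv 𝒜).toLinearMap

variable {𝒜} in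
theorem homogeneousComponentLinearMap_apply_of_mem (w : ι) {v : ι} {x : R} (hx : x ∈ 𝒜 v) :
    δ.homogeneousComponentLinearMap 𝒜 w x = proj 𝒜 (v + w) (δ x) := by
  simp only [homogeneousComponentLinearMap, LinearMap.comp_apply, LinearEquiv.coe_coe,
    decomposeLinearEquiv_apply, decompose_of_mem 𝒜 hx]
  exact toModule_lof K v _

theorem homogeneousComponentLinearMap_mul (w : ι) (x y : R) :
    δ.homogeneousComponentLinearMap 𝒜 w (x * y) =
      x * δ.homogeneousComponentLinearMap 𝒜 w y + y * δ.homogeneousComponentLinearMap 𝒜 w x := by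
  induction x using Decomposition.inductionOn 𝒜 with
  | zero => simp
  | add x x' hx hx' => rw [add_mul, map_add, hx, hx', map_add]; ring
  | @homogeneous a x =>
    induction y using Decomposition.inductionOn 𝒜 with
    | zero => simp
    | add y y' hy hy' => rw [mul_add, map_add, hy, hy', map_add]; ring
    | @homogeneous b y =>
      simp only [homogeneousComponentLinearMap_apply_of_mem δ w (SetLike.mul_mem_graded x.2 y.2),
        homogeneousComponentLinearMap_apply_of_mem δ w x.2,
        homogeneousComponentLinearMap_apply_of_mem δ w y.2, leibniz, smul_eq_mul, map_add,
        proj_apply]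
      rw [add_assoc, coe_decompose_mul_add_of_left_mem 𝒜 x.2, add_left_comm a b,
        coe_decompose_mul_add_of_left_mem 𝒜 y.2]

/-- The degree-`w` homogeneous component of `δ`: on `𝒜 v` it is `δ` followed by the projection
onto `𝒜 (v + w)`. -/
noncomputable def homogeneousComponent (w : ι) : Derivation K R R :=
  Derivation.mk' (δ.homogeneousComponentLinearMap 𝒜 w) fun x y => by
    rw [homogeneousComponentLinearMap_mul, smul_eq_mul, smul_eq_mul, add_comm]

variable {𝒜}

theorem homogeneousComponent_apply_of_mem (w : ι) {v : ι} {x : R} (hx : x ∈ 𝒜 v) :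
    δ.homogeneousComponent 𝒜 w x = proj 𝒜 (v + w) (δ x) :=
  δ.homogeneousComponentLinearMap_apply_of_mem w hx

theorem homogeneousComponent_mem (w : ι) {v : ι} {x : R} (hx : x ∈ 𝒜 v) :
    δ.homogeneousComponent 𝒜 w x ∈ 𝒜 (v + w) := by
  rw [homogeneousComponent_apply_of_mem δ w hx]
  exact (decompose 𝒜 (δ x) _).2

theorem proj_apply_eq_homogeneousComponent_apply {t : ι} {x : R} (hx : x ∈ 𝒜 t) (u : ι) :
    proj 𝒜 u (δ x) = δ.homogeneousComponent 𝒜 (u - t) x := by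
  rw [homogeneousComponent_apply_of_mem δ _ hx, add_sub_cancel]

theorem eq_zero_of_forall_homogeneousComponent_eq_zero
    (h : ∀ w, δ.homogeneousComponent 𝒜 w = 0) : δ = 0 := by
  ext x
  induction x using Decomposition.inductionOn 𝒜 with
  | zero => simp
  | add x y hx hy => simp_all
  | @homogeneous t x =>
    apply (decompose 𝒜).injective
    ext u
    have hu := δ.proj_apply_eq_homogeneousComponent_apply x.2 u
    rw [h, zero_apply, proj_apply] at hu
    simpa using hu

theorem finite_setOf_homogeneousComponent_apply_ne_zero (x : R) :
    {w | δ.homogeneousComponent 𝒜 w x ≠ 0}.Finite := by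
  classical
  induction x using Decomposition.inductionOn 𝒜 with
  | zero => simp
  | add x y hx hy =>
    refine (hx.union hy).subset fun w hw => ?_
    by_contra h
    simp_all
  | @homogeneous t x =>
    refine ((decompose 𝒜 (δ x)).support.finite_toSet.image (· - t)).subset fun w hw => ?_
    refine ⟨t + w, ?_, add_sub_cancel_left t w⟩
    rw [Finset.mem_coe, mem_support_iff, δ.proj_apply_eq_homogeneousComponent_apply x.2,
      add_sub_cancel_left]
    exact hw

theorem finite_setOf_homogeneousComponent_ne_zero [Algebra.FiniteType K R] :
    {w | δ.homogeneousComponent 𝒜 w ≠ 0}.Finite := by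
  obtain ⟨s, hs⟩ := Algebra.FiniteType.out (R := K) (A := R)
  refine (s.finite_toSet.biUnion fun g _ =>
    δ.finite_setOf_homogeneousComponent_apply_ne_zero (𝒜 := 𝒜) g).subset fun w hw => ?_
  by_contra h
  exact hw (ext_of_adjoin_eq_top _ hs fun g hg => not_not.1 fun hg' => h (Set.mem_biUnion hg hg'))

end HomogeneousComponent

section TopComponent

variable {K R ι : Type*} [CommSemiring K] [CommRing R] [Algebra K R]
  [DecidableEq ι] [AddCommGroup ι] [LinearOrder ι] [IsOrderedAddMonoid ι]
  {𝒜 : ι → Submodule K R} [GradedAlgebra 𝒜] (δ : Derivation K R R) {w₀ : ι}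

theorem proj_apply_of_mem_of_le (hδ : ∀ w, w₀ < w → δ.homogeneousComponent 𝒜 w = 0)
    {t c : ι} (htc : t ≤ c) {x : R} (hx : x ∈ 𝒜 t) :
    (∀ u, c + w₀ < u → proj 𝒜 u (δ x) = 0) ∧
      proj 𝒜 (c + w₀) (δ x) = δ.homogeneousComponent 𝒜 w₀ (proj 𝒜 c x) := by
  refine ⟨fun u hu => ?_, ?_⟩
  · rw [δ.proj_apply_eq_homogeneousComponent_apply hx, hδ, zero_apply]
    exact lt_sub_iff_add_lt'.2 ((add_le_add_left htc w₀).trans_lt hu)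
  · rw [δ.proj_apply_eq_homogeneousComponent_apply hx]
    rcases htc.lt_or_eq with htc | rfl
    · rw [hδ, zero_apply, proj_apply, decompose_of_mem_ne 𝒜 hx htc.ne, map_zero]
      exact lt_sub_iff_add_lt'.2 (add_lt_add_left htc w₀)
    · rw [add_sub_cancel_left, proj_apply, decompose_of_mem_same 𝒜 hx]

theorem proj_apply_of_forall_lt_proj_eq_zero
    (hδ : ∀ w, w₀ < w → δ.homogeneousComponent 𝒜 w = 0)
    {c : ι} {z : R} (hz : ∀ u, c < u → proj 𝒜 u z = 0) :
    (∀ u, c + w₀ < u → proj 𝒜 u (δ z) = 0) ∧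
      proj 𝒜 (c + w₀) (δ z) = δ.homogeneousComponent 𝒜 w₀ (proj 𝒜 c z) := by
  refine induction_on_of_forall_lt_proj_eq_zero 𝒜 (by simp) (fun x y hx hy => ?_)
    (fun t htc x hx => δ.proj_apply_of_mem_of_le hδ htc hx) hz
  refine ⟨fun u hu => ?_, ?_⟩
  · rw [map_add, map_add, hx.1 u hu, hy.1 u hu, add_zero]
  · rw [map_add, map_add, hx.2, hy.2, map_add, map_add]

theorem proj_pow_apply_of_forall_lt_proj_eq_zero
    (hδ : ∀ w, w₀ < w → δ.homogeneousComponent 𝒜 w = 0)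
    {c : ι} {z : R} (hz : ∀ u, c < u → proj 𝒜 u z = 0) (N : ℕ) :
    (∀ u, c + N • w₀ < u → proj 𝒜 u ((δ.toLinearMap ^ N) z) = 0) ∧
      proj 𝒜 (c + N • w₀) ((δ.toLinearMap ^ N) z) =
        ((δ.homogeneousComponent 𝒜 w₀).toLinearMap ^ N) (proj 𝒜 c z) := by
  induction N with
  | zero => simpa using hz
  | succ N ih =>
    rw [succ_nsmul, ← add_assoc, pow_succ', Module.End.mul_apply, pow_succ',
      Module.End.mul_apply, ← ih.2]
    exact δ.proj_apply_of_forall_lt_proj_eq_zero hδ ih.1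

theorem homogeneousComponent_pow_apply_of_mem
    (hδ : ∀ w, w₀ < w → δ.homogeneousComponent 𝒜 w = 0) {c : ι} {x : R} (hx : x ∈ 𝒜 c)
    (N : ℕ) :
    ((δ.homogeneousComponent 𝒜 w₀).toLinearMap ^ N) x =
      proj 𝒜 (c + N • w₀) ((δ.toLinearMap ^ N) x) := by
  have hxc : ∀ u, c < u → proj 𝒜 u x = 0 := fun u hu => decompose_of_mem_ne 𝒜 hx hu.ne
  rw [(δ.proj_pow_apply_of_forall_lt_proj_eq_zero hδ hxc N).2, proj_apply,
    decompose_of_mem_same 𝒜 hx]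

theorem homogeneousComponent_locallyNilpotent
    (hδ : ∀ w, w₀ < w → δ.homogeneousComponent 𝒜 w = 0)
    (hln : ∀ f : R, ∃ N : ℕ, (δ.toLinearMap ^ N) f = 0) (f : R) :
    ∃ N : ℕ, ((δ.homogeneousComponent 𝒜 w₀).toLinearMap ^ N) f = 0 := by
  induction f using Decomposition.inductionOn 𝒜 with
  | zero => exact ⟨0, map_zero _⟩
  | add x y hx hy =>
    obtain ⟨M, hM⟩ := hx
    obtain ⟨N, hN⟩ := hy
    refine ⟨N + M, ?_⟩
    rw [map_add, pow_add, Module.End.mul_apply, hM, map_zero, zero_add, pow_mul_comm,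
      Module.End.mul_apply, hN, map_zero]
  | @homogeneous c x =>
    obtain ⟨N, hN⟩ := hln x
    exact ⟨N, by rw [δ.homogeneousComponent_pow_apply_of_mem hδ x.2, hN, map_zero]⟩

theorem exists_homogeneousComponent_ne_zero_locallyNilpotent [Algebra.FiniteType K R]
    (hδ : δ ≠ 0) (hln : ∀ f : R, ∃ N : ℕ, (δ.toLinearMap ^ N) f = 0) :
    ∃ w, δ.homogeneousComponent 𝒜 w ≠ 0 ∧
      ∀ f : R, ∃ N : ℕ, ((δ.homogeneousComponent 𝒜 w).toLinearMap ^ N) f = 0 := by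
  have hne : {w | δ.homogeneousComponent 𝒜 w ≠ 0}.Nonempty := by
    by_contra h
    exact hδ <| δ.eq_zero_of_forall_homogeneousComponent_eq_zero fun w =>
      not_not.1 fun hw => h ⟨w, hw⟩
  obtain ⟨w₀, hw₀, hmax⟩ :=
    Set.exists_max_image _ id (δ.finite_setOf_homogeneousComponent_ne_zero (𝒜 := 𝒜)) hne
  have htop : ∀ w, w₀ < w → δ.homogeneousComponent 𝒜 w = 0 :=
    fun w hw => not_not.1 fun h => not_lt.2 (hmax w h) hw
  exact ⟨w₀, hw₀, δ.homogeneousComponent_locallyNilpotent htop hln⟩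

end TopComponent

end Derivation

theorem exists_homogeneous_lnd_general
    {K R : Type*} [Field K] [CommRing R] [Algebra K R]
    [Algebra.FiniteType K R] (k : ℕ)
    (𝒜 : (Fin k → ℤ) → Submodule K R) [GradedAlgebra 𝒜]
    (δ : Derivation K R R) (hδ : δ ≠ 0)
    (hln : ∀ f : R, ∃ N : ℕ, (δ.toLinearMap ^ N) f = 0) :
    ∃ δ' : Derivation K R R, δ' ≠ 0 ∧
      (∀ f : R, ∃ N : ℕ, (δ'.toLinearMap ^ N) f = 0) ∧
      ∃ w : Fin k → ℤ, ∀ v : Fin k → ℤ, ∀ x ∈ 𝒜 v, δ' x ∈ 𝒜 (v + w) := by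
  let ℬ : Lex (Fin k → ℤ) → Submodule K R := fun v => 𝒜 (ofLex v)
  let : GradedAlgebra ℬ := ‹GradedAlgebra 𝒜›
  obtain ⟨w, hw, hwln⟩ := δ.exists_homogeneousComponent_ne_zero_locallyNilpotent (𝒜 := ℬ) hδ hln
  exact ⟨_, hw, hwln, ofLex w, fun v x hx =>
    δ.homogeneousComponent_mem (𝒜 := ℬ) w (v := toLex v) hx⟩

/-- A finitely generated `ℤᵏ`-graded domain over a field of characteristic zero that admits a
nonzero locally nilpotent derivation admits a nonzero homogeneous locally nilpotent
derivation. -/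
theorem exists_homogeneous_lnd
    {K R : Type*} [Field K] [CharZero K] [CommRing R] [IsDomain R] [Algebra K R]
    [Algebra.FiniteType K R] (k : ℕ)
    (𝒜 : (Fin k → ℤ) → Submodule K R) [GradedAlgebra 𝒜]
    (δ : Derivation K R R) (hδ : δ ≠ 0)
    (hln : ∀ f : R, ∃ N : ℕ, (δ.toLinearMap ^ N) f = 0) :
    ∃ δ' : Derivation K R R, δ' ≠ 0 ∧
      (∀ f : R, ∃ N : ℕ, (δ'.toLinearMap ^ N) f = 0) ∧
      ∃ w : Fin k → ℤ, ∀ v : Fin k → ℤ, ∀ x ∈ 𝒜 v, δ' x ∈ 𝒜 (v + w) :=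
  exists_homogeneous_lnd_general k 𝒜 δ hδ hln
end

section
/- Let g = T_{01}T_{02}^3 + T_{11}^3 + T_{21}^2 and R = K[T_{01},T_{02},T_{11},T_{21}]/(g) over an algebraically closed field K of characteristic zero. Then the derivation δ of R defined on generators by δ(T_{01}) = 3T_{11}^2, δ(T_{02}) = 0, δ(T_{11}) = -T_{02}^3, δ(T_{21}) = 0 is a well-defined locally nilpotent derivation of R. -/
open MvPolynomial

set_option synthInstance.maxHeartbeats 1000000
set_option maxHeartbeats 1000000

/-- The trinomial `g = T₀₁T₀₂³ + T₁₁³ + T₂₁²`, with variables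
`X 0 = T₀₁`, `X 1 = T₀₂`, `X 2 = T₁₁`, `X 3 = T₂₁`. -/
noncomputable def g7 (K : Type*) [Field K] : MvPolynomial (Fin 4) K :=
  X 0 * X 1 ^ 3 + X 2 ^ 3 + X 3 ^ 2

/-- The trinomial algebra `R(g) = K[T₀₁,T₀₂,T₁₁,T₂₁]/(g)`. -/
abbrev R7 (K : Type*) [Field K] : Type _ :=
  MvPolynomial (Fin 4) K ⧸ Ideal.span {g7 K}

/-!
The derivation `D` of `K[T₀₁,T₀₂,T₁₁,T₂₁]` with the given values on the variables is triangular: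
`D T₀₂ = D T₂₁ = 0`, `D T₁₁` is a polynomial in `T₀₂` and `D T₀₁` a polynomial in `T₁₁`. Hence it is
locally nilpotent, since the elements killed by a power of a derivation form a subalgebra.
Moreover `D g = T₀₂³·D T₀₁ + 3T₁₁²·D T₁₁ = 3T₁₁²T₀₂³ - 3T₁₁²T₀₂³ = 0`, so `D` preserves `(g)`
and descends to a derivation of `R`, which stays locally nilpotent because `R` is a quotient.
-/

namespace Derivation

section LocallyNilpotent

variable {R A : Type*} [CommSemiring R] [CommSemiring A] [Algebra R A] (D : Derivation R A A)

def IsLocallyNilpotent : Prop :=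
  ∀ a, ∃ n : ℕ, (D.toLinearMap ^ n) a = 0

theorem pow_succ_apply (n : ℕ) (a : A) :
    (D.toLinearMap ^ (n + 1)) a = (D.toLinearMap ^ n) (D a) := by
  rw [pow_succ, Module.End.mul_apply, coeFn_coe]

theorem pow_add_apply_mul_eq_zero {n m : ℕ} {a b : A} (ha : (D.toLinearMap ^ n) a = 0)
    (hb : (D.toLinearMap ^ m) b = 0) : (D.toLinearMap ^ (n + m)) (a * b) = 0 := by
  induction n generalizing m a b with
  | zero => rw [pow_zero, Module.End.one_apply] at ha; simp [ha]
  | succ n ihn =>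
    induction m generalizing a b with
    | zero => rw [pow_zero, Module.End.one_apply] at hb; simp [hb]
    | succ m ihm =>
      have hDa : (D.toLinearMap ^ n) (D a) = 0 := by rwa [← pow_succ_apply]
      have hDb : (D.toLinearMap ^ m) (D b) = 0 := by rwa [← pow_succ_apply]
      rw [← add_assoc, pow_succ_apply, leibniz, map_add, smul_eq_mul, smul_eq_mul, ihm ha hDb,
        zero_add, Nat.add_right_comm n 1 m, add_assoc, mul_comm, ihn hDa hb]

def nilSubalgebra : Subalgebra R A where
  carrier := {a | ∃ n : ℕ, (D.toLinearMap ^ n) a = 0}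
  mul_mem' := fun ⟨n, ha⟩ ⟨m, hb⟩ => ⟨n + m, D.pow_add_apply_mul_eq_zero ha hb⟩
  add_mem' := fun {a b} ⟨n, ha⟩ ⟨m, hb⟩ => ⟨n + m, by
    have ha' : (D.toLinearMap ^ (n + m)) a = 0 := by
      rw [add_comm, pow_add, Module.End.mul_apply, ha, map_zero]
    have hb' : (D.toLinearMap ^ (n + m)) b = 0 := by
      rw [pow_add, Module.End.mul_apply, hb, map_zero]
    rw [map_add, ha', hb', add_zero]⟩
  algebraMap_mem' r := ⟨1, by rw [pow_one]; exact D.map_algebraMap r⟩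

theorem mem_nilSubalgebra_of_apply_mem {a : A} (h : D a ∈ D.nilSubalgebra) :
    a ∈ D.nilSubalgebra :=
  let ⟨n, hn⟩ := h
  ⟨n + 1, by rwa [pow_succ_apply]⟩

theorem mem_nilSubalgebra_of_apply_eq_zero {a : A} (h : D a = 0) : a ∈ D.nilSubalgebra :=
  D.mem_nilSubalgebra_of_apply_mem (h ▸ zero_mem _)

theorem isLocallyNilpotent_of_adjoin_eq_top {s : Set A} (hs : Algebra.adjoin R s = ⊤)
    (hD : s ⊆ D.nilSubalgebra) : D.IsLocallyNilpotent := by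
  have hle := Algebra.adjoin_le hD
  rw [hs] at hle
  exact fun a => hle Algebra.mem_top

end LocallyNilpotent

section Quotient

variable {R A M : Type*} [CommSemiring R] [CommRing A] [CommRing M] [Algebra R A] [Algebra R M]
  {F : Type*} [FunLike F A M] [AlgHomClass F R A M] {f : F} (hf : Function.Surjective f)
  {D : Derivation R A A} (hD : ∀ x, f x = 0 → f (D x) = 0)

theorem liftOfSurjective_pow_apply (n : ℕ) (x : A) :
    ((liftOfSurjective hf hD).toLinearMap ^ n) (f x) = f ((D.toLinearMap ^ n) x) := by
  induction n generalizing x with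
  | zero => rfl
  | succ n ih => rw [pow_succ_apply, liftOfSurjective_apply, ih, pow_succ_apply]

theorem IsLocallyNilpotent.liftOfSurjective (h : D.IsLocallyNilpotent) :
    (liftOfSurjective hf hD).IsLocallyNilpotent := fun y => by
  obtain ⟨x, rfl⟩ := hf y
  obtain ⟨n, hn⟩ := h x
  exact ⟨n, by rw [liftOfSurjective_pow_apply, hn, map_zero]⟩

end Quotient

theorem map_mem_span_of_forall_mem {R A : Type*} [CommSemiring R] [CommSemiring A] [Algebra R A]
    (D : Derivation R A A) {s : Set A} (hs : ∀ g ∈ s, D g ∈ Ideal.span s) {x : A}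
    (hx : x ∈ Ideal.span s) : D x ∈ Ideal.span s := by
  induction hx using Submodule.span_induction with
  | mem g hg => exact hs g hg
  | zero => rw [map_zero]; exact zero_mem _
  | add x y _ _ hx hy => rw [map_add]; exact add_mem hx hy
  | smul a x hxI hDx =>
    rw [smul_eq_mul, leibniz]
    exact add_mem (Ideal.mul_mem_left _ a hDx) (Ideal.mul_mem_right _ _ hxI)

end Derivation

noncomputable def D7 (K : Type*) [Field K] :
    Derivation K (MvPolynomial (Fin 4) K) (MvPolynomial (Fin 4) K) :=
  mkDerivation K ![C 3 * X 2 ^ 2, 0, -(X 1 ^ 3), 0]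

theorem D7_g7 (K : Type*) [Field K] : D7 K (g7 K) = 0 := by
  simp only [g7, D7, map_add, Derivation.leibniz, Derivation.leibniz_pow, mkDerivation_X,
    Matrix.cons_val, smul_eq_mul, nsmul_eq_mul, map_ofNat, Nat.cast_ofNat]
  ring

theorem D7_isLocallyNilpotent (K : Type*) [Field K] : (D7 K).IsLocallyNilpotent := by
  have hX1 : X 1 ∈ (D7 K).nilSubalgebra :=
    (D7 K).mem_nilSubalgebra_of_apply_eq_zero (mkDerivation_X _ _ _)
  have hX3 : X 3 ∈ (D7 K).nilSubalgebra :=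
    (D7 K).mem_nilSubalgebra_of_apply_eq_zero (mkDerivation_X _ _ _)
  have hX2 : X 2 ∈ (D7 K).nilSubalgebra := by
    refine (D7 K).mem_nilSubalgebra_of_apply_mem ?_
    rw [D7, mkDerivation_X]
    exact neg_mem (pow_mem hX1 3)
  have hX0 : X 0 ∈ (D7 K).nilSubalgebra := by
    refine (D7 K).mem_nilSubalgebra_of_apply_mem ?_
    rw [D7, mkDerivation_X]
    exact mul_mem (Subalgebra.algebraMap_mem _ 3) (pow_mem hX2 2)
  refine (D7 K).isLocallyNilpotent_of_adjoin_eq_top (adjoin_range_X (σ := Fin 4)) ?_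
  rintro _ ⟨i, rfl⟩
  fin_cases i <;> assumption

theorem exists_lnd_on_trinomial_1332_typeII_two_general (K : Type*) [Field K] :
    ∃ δ : Derivation K (R7 K) (R7 K),
      δ (Ideal.Quotient.mk (Ideal.span {g7 K}) (X 0)) =
          Ideal.Quotient.mk (Ideal.span {g7 K}) (C 3 * X 2 ^ 2) ∧
      δ (Ideal.Quotient.mk (Ideal.span {g7 K}) (X 1)) = 0 ∧
      δ (Ideal.Quotient.mk (Ideal.span {g7 K}) (X 2)) =
          Ideal.Quotient.mk (Ideal.span {g7 K}) (-(X 1 ^ 3)) ∧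
      δ (Ideal.Quotient.mk (Ideal.span {g7 K}) (X 3)) = 0 ∧
      ∀ f, ∃ m : ℕ, (δ.toLinearMap ^ m) f = 0 := by
  have hmk : Function.Surjective (Ideal.Quotient.mkₐ K (Ideal.span {g7 K})) :=
    Ideal.Quotient.mkₐ_surjective K _
  have hD : ∀ p, Ideal.Quotient.mkₐ K (Ideal.span {g7 K}) p = 0 →
      Ideal.Quotient.mkₐ K (Ideal.span {g7 K}) (D7 K p) = 0 := by
    simp only [Ideal.Quotient.mkₐ_eq_mk, Ideal.Quotient.eq_zero_iff_mem]
    refine fun p hp => (D7 K).map_mem_span_of_forall_mem ?_ hp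
    rintro _ rfl
    rw [D7_g7]
    exact zero_mem _
  have hδ (i : Fin 4) : Derivation.liftOfSurjective hmk hD (Ideal.Quotient.mk _ (X i)) =
      Ideal.Quotient.mk _ (D7 K (X i)) :=
    Derivation.liftOfSurjective_apply hmk hD (X i)
  refine ⟨Derivation.liftOfSurjective hmk hD, (hδ 0).trans ?_, (hδ 1).trans ?_, (hδ 2).trans ?_,
    (hδ 3).trans ?_, (D7_isLocallyNilpotent K).liftOfSurjective hmk hD⟩ <;>
  simp [D7, mkDerivation_X]

/-- There is a (necessarily unique) derivation `δ` of `R = K[T₀₁,T₀₂,T₁₁,T₂₁]/(g)` with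
`δ(T₀₁) = 3T₁₁²`, `δ(T₀₂) = 0`, `δ(T₁₁) = -T₀₂³`, `δ(T₂₁) = 0`, and it is locally
nilpotent. -/
theorem exists_lnd_on_trinomial_1332_typeII_two (K : Type*) [Field K] [IsAlgClosed K]
    [CharZero K] :
    ∃ δ : Derivation K (R7 K) (R7 K),
      δ (Ideal.Quotient.mk (Ideal.span {g7 K}) (X 0)) =
          Ideal.Quotient.mk (Ideal.span {g7 K}) (C 3 * X 2 ^ 2) ∧
      δ (Ideal.Quotient.mk (Ideal.span {g7 K}) (X 1)) = 0 ∧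
      δ (Ideal.Quotient.mk (Ideal.span {g7 K}) (X 2)) =
          Ideal.Quotient.mk (Ideal.span {g7 K}) (-(X 1 ^ 3)) ∧
      δ (Ideal.Quotient.mk (Ideal.span {g7 K}) (X 3)) = 0 ∧
      ∀ f, ∃ m : ℕ, (δ.toLinearMap ^ m) f = 0 :=
  exists_lnd_on_trinomial_1332_typeII_two_general K
end
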